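/- (Converse for Proposition 6) Let A_{ij} be a smooth symmetric tensor field on ℝ³. Then the tensor field T^{ij} := ε^{kl(i} ∂_l ( ΔA^{j)}_{k} − ∂_p∂^{j)} A_{kp} ), i.e. T^{ij} = (1/2) Σ_{k,l} [ ε^{kli} ∂_l ( ΔA_{jk} − Σ_p ∂_j∂_p A_{kp} ) + ε^{klj} ∂_l ( ΔA_{ik} − Σ_p ∂_i∂_p A_{kp} ) ], is symmetric, transverse (∂_j T^{ij}=0 for all i) and traceless (δ_{ij}T^{ij}=0). -/

import Mathlib

/-- Partial derivative in the k-th Cartesian coordinate direction on ℝ^D. -/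
noncomputable def pd {D : ℕ} (k : Fin D) (f : (Fin D → ℝ) → ℝ) : (Fin D → ℝ) → ℝ :=
  fun x => fderiv ℝ f x (Pi.single k 1)

/-- Euclidean Laplacian Σ_k ∂_k∂_k. -/
noncomputable def lap {D : ℕ} (f : (Fin D → ℝ) → ℝ) : (Fin D → ℝ) → ℝ :=
  fun x => ∑ k, pd k (pd k f) x

/-- Three-dimensional Levi-Civita symbol with ε^{123} = 1. -/
def eps3 (i j k : Fin 3) : ℝ :=
  if (i,j,k) = (0,1,2) ∨ (i,j,k) = (1,2,0) ∨ (i,j,k) = (2,0,1) then 1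
  else if (i,j,k) = (2,1,0) ∨ (i,j,k) = (1,0,2) ∨ (i,j,k) = (0,2,1) then -1
  else 0

/-- Formula (26): T^{ij} = ε^{kl(i} ∂_l ( ΔA^{j)}_k − ∂_p∂^{j)} A_{kp} ). -/
noncomputable def T26 (A : Fin 3 → Fin 3 → (Fin 3 → ℝ) → ℝ) (i j : Fin 3) :
    (Fin 3 → ℝ) → ℝ :=
  fun x => (1/2 : ℝ) * ∑ k, ∑ l,
    (eps3 k l i * pd l (fun y => lap (A j k) y - ∑ p, pd j (pd p (A k p)) y) x
     + eps3 k l j * pd l (fun y => lap (A i k) y - ∑ p, pd i (pd p (A k p)) y) x)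

/-! Write `T^{ij} = ½ (S^{ij} + S^{ji})` with `S^{ij} = ε^{kli} ∂_l B_{jk}` (`negCurl`) and
`B_{jk} = ΔA_{jk} − ∂_j ∂^p A_{kp}` (`lapSubGradDiv`), so symmetry is built in. The trace
`ε^{kli} ∂_l B_{ik}` vanishes since `ε` is antisymmetric while `∂_l ΔA_{ik}` is symmetric in `i, k`
and `∂_l ∂_i ∂^p A_{kp}` is symmetric in `l, i`. As for the divergence, `∂_j S^{ji}` is the
divergence of a curl, and `∂_j S^{ij} = ε^{kli} ∂_l (∂^j B_{jk})`, where
`∂^j B_{jk} = Δ ∂^j A_{jk} − Δ ∂^p A_{kp}` vanishes because `A` is symmetric. -/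

open Finset
open scoped ContDiff

section PartialDerivatives

variable {D : ℕ} {f g : (Fin D → ℝ) → ℝ} {x : Fin D → ℝ}

lemma ContDiff.pd (hf : ContDiff ℝ ∞ f) (k : Fin D) : ContDiff ℝ ∞ (pd k f) :=
  (contDiff_infty_iff_fderiv.1 hf).2.clm_apply contDiff_const

lemma ContDiff.lap (hf : ContDiff ℝ ∞ f) : ContDiff ℝ ∞ (lap f) :=
  ContDiff.sum fun k _ => (hf.pd k).pd k

lemma pd_fun_add (hf : DifferentiableAt ℝ f x) (hg : DifferentiableAt ℝ g x) (k : Fin D) :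
    pd k (fun y => f y + g y) x = pd k f x + pd k g x := by
  simp [pd, fderiv_fun_add hf hg]

lemma pd_fun_sub (hf : DifferentiableAt ℝ f x) (hg : DifferentiableAt ℝ g x) (k : Fin D) :
    pd k (fun y => f y - g y) x = pd k f x - pd k g x := by
  simp [pd, fderiv_fun_sub hf hg]

lemma pd_const_mul (c : ℝ) (hf : DifferentiableAt ℝ f x) (k : Fin D) :
    pd k (fun y => c * f y) x = c * pd k f x := by
  simp [pd, fderiv_const_mul hf c]

lemma pd_fun_sum {ι : Type*} (s : Finset ι) {F : ι → (Fin D → ℝ) → ℝ}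
    (hF : ∀ i ∈ s, DifferentiableAt ℝ (F i) x) (k : Fin D) :
    pd k (fun y => ∑ i ∈ s, F i y) x = ∑ i ∈ s, pd k (F i) x := by
  simp [pd, fderiv_fun_sum hF]

lemma pd_const (c : ℝ) (k : Fin D) : pd k (fun _ => c) x = 0 := by
  simp [pd]

lemma pd_comm (hf : ContDiff ℝ ∞ f) (k l : Fin D) : pd k (pd l f) = pd l (pd k f) := by
  funext x
  have hf' : Differentiable ℝ (fderiv ℝ f) :=
    (contDiff_infty_iff_fderiv.1 hf).2.differentiable (by simp)
  have hsecond : ∀ m n : Fin D,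
      pd m (pd n f) x = fderiv ℝ (fderiv ℝ f) x (Pi.single m 1) (Pi.single n 1) := by
    intro m n
    unfold pd
    rw [fderiv_clm_apply (hf' x) (differentiableAt_const _)]
    simp
  rw [hsecond, hsecond]
  exact (hf.contDiffAt.isSymmSndFDerivAt
    (by simpa using WithTop.coe_le_coe.2 (le_top : (2 : ℕ∞) ≤ ⊤))).eq _ _

lemma pd_lap_comm (hf : ContDiff ℝ ∞ f) (k : Fin D) : pd k (lap f) x = lap (pd k f) x := by
  unfold lap
  rw [pd_fun_sum _ fun m _ => ((hf.pd m).pd m).differentiable (by simp) x]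
  refine sum_congr rfl fun m _ => ?_
  rw [pd_comm (hf.pd m), pd_comm hf k m]

end PartialDerivatives

lemma sum_eps3_mul_eq_zero_of_symm_13 (C : Fin 3 → Fin 3 → Fin 3 → ℝ)
    (hC : ∀ a b c, C a b c = C c b a) : ∑ c, ∑ a, ∑ b, eps3 a b c * C a b c = 0 := by
  simp [Fin.sum_univ_three, eps3]
  linarith [hC 0 1 2, hC 1 2 0, hC 2 0 1]

lemma sum_eps3_mul_eq_zero_of_symm_23 (C : Fin 3 → Fin 3 → Fin 3 → ℝ)
    (hC : ∀ a b c, C a b c = C a c b) : ∑ c, ∑ a, ∑ b, eps3 a b c * C a b c = 0 := by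
  simp [Fin.sum_univ_three, eps3]
  linarith [hC 0 1 2, hC 1 2 0, hC 2 0 1]

noncomputable def negCurl (V : Fin 3 → (Fin 3 → ℝ) → ℝ) (i : Fin 3) : (Fin 3 → ℝ) → ℝ :=
  fun x => ∑ k, ∑ l, eps3 k l i * pd l (V k) x

section NegCurl

variable {V : Fin 3 → (Fin 3 → ℝ) → ℝ} {x : Fin 3 → ℝ}

lemma ContDiff.negCurl (hV : ∀ k, ContDiff ℝ ∞ (V k)) (i : Fin 3) :
    ContDiff ℝ ∞ (negCurl V i) :=
  ContDiff.sum fun k _ => ContDiff.sum fun l _ => contDiff_const.mul ((hV k).pd l)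

lemma pd_negCurl (hV : ∀ k, ContDiff ℝ ∞ (V k)) (j i : Fin 3) :
    pd j (negCurl V i) x = ∑ k, ∑ l, eps3 k l i * pd l (pd j (V k)) x := by
  unfold negCurl
  rw [pd_fun_sum _ fun k _ => (ContDiff.sum fun l _ =>
    contDiff_const.mul ((hV k).pd l)).differentiable (by simp) x]
  refine sum_congr rfl fun k _ => ?_
  rw [pd_fun_sum _ fun l _ => (contDiff_const.mul ((hV k).pd l)).differentiable (by simp) x]
  refine sum_congr rfl fun l _ => ?_
  rw [pd_const_mul _ (((hV k).pd l).differentiable (by simp) x), pd_comm (hV k)]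

lemma sum_pd_negCurl_self (hV : ∀ k, ContDiff ℝ ∞ (V k)) : ∑ i, pd i (negCurl V i) x = 0 := by
  simp only [pd_negCurl hV]
  exact sum_eps3_mul_eq_zero_of_symm_23 (fun k l i => pd l (pd i (V k)) x)
    fun k l i => congrFun (pd_comm (hV k) l i) x

lemma sum_pd_negCurl {W : Fin 3 → Fin 3 → (Fin 3 → ℝ) → ℝ}
    (hW : ∀ j k, ContDiff ℝ ∞ (W j k)) (i : Fin 3) :
    ∑ j, pd j (negCurl (W j) i) x = negCurl (fun k y => ∑ j, pd j (W j k) y) i x := by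
  simp only [pd_negCurl (hW _), negCurl]
  rw [sum_comm]
  refine sum_congr rfl fun k _ => ?_
  rw [sum_comm]
  refine sum_congr rfl fun l _ => ?_
  rw [pd_fun_sum _ fun j _ => ((hW j k).pd j).differentiable (by simp) x, mul_sum]

lemma negCurl_zero (i : Fin 3) : negCurl (fun _ _ => 0) i x = 0 := by
  simp [negCurl, pd_const]

end NegCurl

noncomputable def lapSubGradDiv {D : ℕ} (A : Fin D → Fin D → (Fin D → ℝ) → ℝ) (j k : Fin D) :
    (Fin D → ℝ) → ℝ :=
  fun y => lap (A j k) y - ∑ p, pd j (pd p (A k p)) y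

section LapSubGradDiv

variable {D : ℕ} {A : Fin D → Fin D → (Fin D → ℝ) → ℝ} {x : Fin D → ℝ}

lemma ContDiff.lapSubGradDiv (hA : ∀ i j, ContDiff ℝ ∞ (A i j)) (j k : Fin D) :
    ContDiff ℝ ∞ (lapSubGradDiv A j k) :=
  (hA j k).lap.sub (ContDiff.sum fun p _ => ((hA k p).pd p).pd j)

lemma pd_lapSubGradDiv (hA : ∀ i j, ContDiff ℝ ∞ (A i j)) (l j k : Fin D) :
    pd l (lapSubGradDiv A j k) x
      = pd l (lap (A j k)) x - ∑ p, pd l (pd j (pd p (A k p))) x := by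
  unfold lapSubGradDiv
  rw [pd_fun_sub ((hA j k).lap.differentiable (by simp) x)
    ((ContDiff.sum fun p _ => ((hA k p).pd p).pd j).differentiable (by simp) x),
    pd_fun_sum _ fun p _ => (((hA k p).pd p).pd j).differentiable (by simp) x]

lemma sum_pd_lapSubGradDiv (hA : ∀ i j, ContDiff ℝ ∞ (A i j)) (hA_symm : ∀ i j, A i j = A j i)
    (k : Fin D) : ∑ j, pd j (lapSubGradDiv A j k) x = 0 := by
  simp only [pd_lapSubGradDiv hA, pd_lap_comm (hA _ _), sum_sub_distrib]
  rw [sum_comm (f := fun j p => pd j (pd j (pd p (A k p))) x), sub_eq_zero]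
  exact sum_congr rfl fun j _ => by rw [hA_symm j k]; rfl

end LapSubGradDiv

section T26

variable {A : Fin 3 → Fin 3 → (Fin 3 → ℝ) → ℝ}

lemma T26_eq (i j : Fin 3) (x : Fin 3 → ℝ) :
    T26 A i j x
      = (1/2 : ℝ) * (negCurl (lapSubGradDiv A j) i x + negCurl (lapSubGradDiv A i) j x) := by
  simp only [T26, negCurl, ← sum_add_distrib]
  rfl

lemma T26_symm (i j : Fin 3) (x : Fin 3 → ℝ) :
    T26 A i j x = T26 A j i x := by
  rw [T26_eq, T26_eq, add_comm]

lemma T26_diag (i : Fin 3) (x : Fin 3 → ℝ) :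
    T26 A i i x = negCurl (lapSubGradDiv A i) i x := by
  rw [T26_eq]
  ring

lemma sum_pd_T26 (hA : ∀ i j, ContDiff ℝ ∞ (A i j)) (hA_symm : ∀ i j, A i j = A j i)
    (i : Fin 3) (x : Fin 3 → ℝ) : ∑ j, pd j (T26 A i j) x = 0 := by
  have hB := ContDiff.lapSubGradDiv hA
  have hS : ∀ j i, Differentiable ℝ (negCurl (lapSubGradDiv A j) i) :=
    fun j i => (ContDiff.negCurl (hB j) i).differentiable (by simp)
  have hdiv : (fun k y => ∑ j, pd j (lapSubGradDiv A j k) y) = fun _ _ => 0 :=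
    funext fun k => funext fun y => sum_pd_lapSubGradDiv hA hA_symm k
  calc ∑ j, pd j (T26 A i j) x
      = (1/2 : ℝ) * (∑ j, pd j (negCurl (lapSubGradDiv A j) i) x
          + ∑ j, pd j (negCurl (lapSubGradDiv A i) j) x) := by
        rw [← sum_add_distrib, mul_sum]
        refine sum_congr rfl fun j _ => ?_
        rw [show T26 A i j = _ from funext (T26_eq i j),
          pd_const_mul _ ((hS j i x).fun_add (hS i j x)), pd_fun_add (hS j i x) (hS i j x)]
    _ = 0 := by
        rw [sum_pd_negCurl hB, hdiv, negCurl_zero, sum_pd_negCurl_self (hB i),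
          add_zero, mul_zero]

lemma sum_T26_diag (hA : ∀ i j, ContDiff ℝ ∞ (A i j)) (hA_symm : ∀ i j, A i j = A j i)
    (x : Fin 3 → ℝ) : ∑ i, T26 A i i x = 0 := by
  simp only [T26_diag, negCurl, pd_lapSubGradDiv hA, mul_sub, sum_sub_distrib]
  rw [sum_eps3_mul_eq_zero_of_symm_13 (fun k l i => pd l (lap (A i k)) x)
      fun k l i => by rw [hA_symm],
    sum_eps3_mul_eq_zero_of_symm_23 (fun k l i => ∑ p, pd l (pd i (pd p (A k p))) x)
      fun k l i => sum_congr rfl fun p _ => congrFun (pd_comm ((hA k p).pd p) l i) x,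
    sub_zero]

end T26

/-- converse for Proposition 6: for any smooth symmetric A_{ij} on ℝ³,
the tensor field T^{ij} of formula (26) is symmetric, transverse and traceless. -/
theorem stmt_14
    (A : Fin 3 → Fin 3 → (Fin 3 → ℝ) → ℝ)
    (hsmooth : ∀ i j, ContDiff ℝ (⊤ : ℕ∞) (A i j))
    (hAsym : ∀ i j x, A i j x = A j i x)
    (T : Fin 3 → Fin 3 → (Fin 3 → ℝ) → ℝ)
    (hT : ∀ i j x, T i j x = T26 A i j x) :
    (∀ i j x, T i j x = T j i x) ∧
    (∀ i x, ∑ j, pd j (T i j) x = 0) ∧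
    (∀ x, ∑ i, T i i x = 0) := by
  obtain rfl : T = T26 A := funext fun i => funext fun j => funext (hT i j)
  have hA_symm : ∀ i j, A i j = A j i := fun i j => funext (hAsym i j)
  exact ⟨T26_symm, sum_pd_T26 hsmooth hA_symm, sum_T26_diag hsmooth hA_symm⟩
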